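/- arXiv:2301.03125 — 5 statements merged into one kernel-verified Lean document; each statement's English description precedes it below -/
import Mathlib

section
/- Let W ⊆ ℝ^p be convex, γ > 0, and let f₁,...,fₙ, f'_i : W → ℝ≥0 be convex, L-smooth, non-negative functions bounded above by M, where the collection {f'_j} equals {f_j} except at a single index i where f_i is replaced by f'_i. Let r : W → ℝ be convex. Let w* minimize R(w) + (γ/2)‖w - w₀‖² and w'* minimize R'(w) + (γ/2)‖w - w₀'‖² over W, where R(w) = (1/n)Σⱼ fⱼ(w) + r(w) and R'(w) = (1/n)Σⱼ f'ⱼ(w) + r(w). Then ‖w* - w'*‖ ≤ ‖w₀ - w₀'‖ + 4√(2LM)/(nγ). -/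
/-!
The objective `Φ = R + (γ/2)‖· - w₀‖²` is `γ`-strongly convex, so its minimiser `w*` over `W`
satisfies the quadratic growth bound `Φ(w*) + (γ/2)‖w - w*‖² ≤ Φ(w)` on `W`. Adding this
bound for the two problems, each evaluated at the other's minimiser, the regularisers cancel,
the shifted centres contribute `γ ⟪w* - w'*, w₀ - w₀'⟫ ≤ γ ‖w* - w'*‖ ‖w₀ - w₀'‖`, and the
risks differ only through `(fᵢ - f'ᵢ)/n`, which by the self-bounding gradient estimate
`‖∇f‖ ≤ √(2LM)` changes by at most `2√(2LM) ‖w* - w'*‖ / n`. Dividing by `γ ‖w* - w'*‖` gives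
the bound, even with `2` in place of `4`.
-/

open RealInnerProductSpace

/-- `g` is `L`-smooth: differentiable with the quadratic upper/lower bound. -/
def LSmooth {p : ℕ} (L : ℝ) (g : EuclideanSpace ℝ (Fin p) → ℝ) : Prop :=
  Differentiable ℝ g ∧
    ∀ w w', |g w - g w' - ⟪gradient g w, w - w'⟫| ≤ L / 2 * ‖w - w'‖ ^ 2

open Filter Topology

namespace LSmooth

variable {p : ℕ} {L M : ℝ} {g : EuclideanSpace ℝ (Fin p) → ℝ}

theorem norm_gradient_sq_le (hg : LSmooth L g) (hL : 0 < L) (hg₀ : ∀ w, 0 ≤ g w)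
    (x : EuclideanSpace ℝ (Fin p)) : ‖gradient g x‖ ^ 2 ≤ 2 * L * g x := by
  -- a gradient step of length `1 / L` decreases `g` by at least `‖∇g x‖² / (2L)`
  have hstep := (abs_le.1 (hg.2 x (x - L⁻¹ • gradient g x))).1
  have hnonneg := hg₀ (x - L⁻¹ • gradient g x)
  generalize g (x - L⁻¹ • gradient g x) = gy at hstep hnonneg
  rw [sub_sub_cancel, real_inner_smul_right, real_inner_self_eq_norm_sq, norm_smul,
    Real.norm_of_nonneg (inv_nonneg.2 hL.le)] at hstep
  field_simp at hstep
  nlinarith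

theorem norm_gradient_le (hg : LSmooth L g) (hL : 0 < L) (hg₀ : ∀ w, 0 ≤ g w)
    (hgM : ∀ w, g w ≤ M) (x : EuclideanSpace ℝ (Fin p)) :
    ‖gradient g x‖ ≤ √(2 * L * M) :=
  Real.le_sqrt_of_sq_le <| (hg.norm_gradient_sq_le hL hg₀ x).trans <| by gcongr; exact hgM x

theorem abs_sub_le (hg : LSmooth L g) (hL : 0 < L) (hg₀ : ∀ w, 0 ≤ g w)
    (hgM : ∀ w, g w ≤ M) (a b : EuclideanSpace ℝ (Fin p)) :
    |g a - g b| ≤ √(2 * L * M) * ‖a - b‖ :=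
  convex_univ.norm_image_sub_le_of_norm_fderiv_le (fun x _ ↦ hg.1 x)
    (fun x _ ↦ by
      rw [← toDual_gradient, LinearIsometryEquiv.norm_map]
      exact hg.norm_gradient_le hL hg₀ hgM x)
    (Set.mem_univ b) (Set.mem_univ a)

end LSmooth

section RegularizedRisk

variable {E : Type*} {n : ℕ}

noncomputable def regularizedRisk (f : Fin n → E → ℝ) (r : E → ℝ) (w : E) : ℝ :=
  1 / (n : ℝ) * ∑ j, f j w + r w

theorem convexOn_regularizedRisk [AddCommMonoid E] [Module ℝ E] {s : Set E}
    {f : Fin n → E → ℝ} {r : E → ℝ} (hf : ∀ j, ConvexOn ℝ s (f j)) (hr : ConvexOn ℝ s r) :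
    ConvexOn ℝ s (regularizedRisk f r) := by
  have hsum : ConvexOn ℝ s (∑ j, f j) :=
    Finset.sum_induction _ (ConvexOn ℝ s) (fun _ _ ↦ ConvexOn.add)
      (convexOn_const 0 hr.1) fun j _ ↦ hf j
  refine ((hsum.smul (by positivity : (0 : ℝ) ≤ 1 / n)).add hr).congr fun w _ ↦ ?_
  simp [regularizedRisk, Finset.sum_apply]

theorem regularizedRisk_sub_regularizedRisk {f f' : Fin n → E → ℝ} {i : Fin n}
    (hff' : ∀ j, j ≠ i → f' j = f j) (r : E → ℝ) (w : E) :
    regularizedRisk f r w - regularizedRisk f' r w = (f i w - f' i w) / n := by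
  have hsum : ∑ j, f j w - ∑ j, f' j w = f i w - f' i w := by
    rw [← Finset.sum_sub_distrib]
    exact Finset.sum_eq_single_of_mem i (Finset.mem_univ i)
      fun j _ hj ↦ by rw [hff' j hj, sub_self]
  rw [regularizedRisk, regularizedRisk, ← hsum]
  ring

end RegularizedRisk

section InnerProductSpace

variable {E : Type*} [NormedAddCommGroup E] [InnerProductSpace ℝ E]

theorem ConvexOn.strongConvexOn_add_sq_norm_sub {s : Set E} {f : E → ℝ} (hf : ConvexOn ℝ s f)
    (m : ℝ) (w₀ : E) : StrongConvexOn s m fun w ↦ f w + m / 2 * ‖w - w₀‖ ^ 2 := by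
  rw [strongConvexOn_iff_convex]
  refine (hf.add ((((-m) • innerₗ E w₀).convexOn hf.1).add_const (m / 2 * ‖w₀‖ ^ 2))).congr
    fun w _ ↦ ?_
  simp only [Pi.add_apply, LinearMap.smul_apply, innerₗ_apply_apply, smul_eq_mul,
    norm_sub_sq_real, real_inner_comm w₀]
  ring

theorem StrongConvexOn.add_sq_le_of_isMinOn {s : Set E} {f : E → ℝ} {m : ℝ} {x y : E}
    (hf : StrongConvexOn s m f) (hmin : IsMinOn f s x) (hx : x ∈ s) (hy : y ∈ s) :
    f x + m / 2 * ‖y - x‖ ^ 2 ≤ f y := by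
  have hstep : ∀ t ∈ Set.Ioc (0 : ℝ) 1, f x + (1 - t) * (m / 2 * ‖y - x‖ ^ 2) ≤ f y := by
    rintro t ⟨ht0, ht1⟩
    have hconv := hf.2 hx hy (sub_nonneg.2 ht1) ht0.le (sub_add_cancel 1 t)
    have hle := isMinOn_iff.1 hmin _ (hf.1 hx hy (sub_nonneg.2 ht1) ht0.le (sub_add_cancel 1 t))
    rw [norm_sub_rev] at hconv
    simp only [smul_eq_mul] at hconv
    nlinarith
  have hlim : Tendsto (fun t : ℝ ↦ f x + (1 - t) * (m / 2 * ‖y - x‖ ^ 2)) (𝓝[>] 0)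
      (𝓝 (f x + m / 2 * ‖y - x‖ ^ 2)) := by
    have : Continuous fun t : ℝ ↦ f x + (1 - t) * (m / 2 * ‖y - x‖ ^ 2) := by fun_prop
    simpa using this.continuousWithinAt.tendsto (x := 0) (s := Set.Ioi 0)
  exact le_of_tendsto hlim (eventually_of_mem (Ioc_mem_nhdsGT zero_lt_one) hstep)

theorem norm_sub_le_of_quadratic_growth {F F' : E → ℝ} {γ c : ℝ} (hγ : 0 < γ) (hc : 0 ≤ c)
    {w₀ w₀' x x' : E}
    (hx : F x + γ / 2 * ‖x - w₀‖ ^ 2 + γ / 2 * ‖x' - x‖ ^ 2 ≤ F x' + γ / 2 * ‖x' - w₀‖ ^ 2)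
    (hx' : F' x' + γ / 2 * ‖x' - w₀'‖ ^ 2 + γ / 2 * ‖x - x'‖ ^ 2 ≤ F' x + γ / 2 * ‖x - w₀'‖ ^ 2)
    (hF : F x' - F' x' - (F x - F' x) ≤ c * ‖x - x'‖) :
    ‖x - x'‖ ≤ ‖w₀ - w₀'‖ + c / γ := by
  have hcross : ‖x' - w₀‖ ^ 2 - ‖x - w₀‖ ^ 2 + ‖x - w₀'‖ ^ 2 - ‖x' - w₀'‖ ^ 2 =
      2 * ⟪x - x', w₀ - w₀'⟫ := by
    simp only [norm_sub_sq_real, inner_sub_left, inner_sub_right, real_inner_comm]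
    ring
  have hCS := real_inner_le_norm (x - x') (w₀ - w₀')
  rw [norm_sub_rev x'] at hx
  have hsq : γ * ‖x - x'‖ * ‖x - x'‖ ≤ (γ * ‖w₀ - w₀'‖ + c) * ‖x - x'‖ := by nlinarith
  rcases (norm_nonneg (x - x')).eq_or_lt with hD | hD
  · rw [← hD]; positivity
  · have hlin := le_of_mul_le_mul_right hsq hD
    rw [← sub_le_iff_le_add', le_div_iff₀' hγ]
    linarith

end InnerProductSpace

theorem minibatch_prox_stability_expansion_general {p n : ℕ}
    (W : Set (EuclideanSpace ℝ (Fin p)))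
    (L M γ : ℝ) (hL : 0 < L) (hγ : 0 < γ)
    (f f' : Fin n → EuclideanSpace ℝ (Fin p) → ℝ) (i : Fin n)
    (hdiff : ∀ j, j ≠ i → f' j = f j)
    (hconv : ∀ j, ConvexOn ℝ W (f j)) (hconv' : ConvexOn ℝ W (f' i))
    (hsm : ∀ j, LSmooth L (f j)) (hsm' : LSmooth L (f' i))
    (hbd : ∀ j w, 0 ≤ f j w ∧ f j w ≤ M) (hbd' : ∀ w, 0 ≤ f' i w ∧ f' i w ≤ M)
    (r : EuclideanSpace ℝ (Fin p) → ℝ) (hr : ConvexOn ℝ W r)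
    (w₀ w₀' ws ws' : EuclideanSpace ℝ (Fin p))
    (hws : ws ∈ W) (hws' : ws' ∈ W)
    (hmin : ∀ w ∈ W,
      ((1 / (n : ℝ)) * ∑ j, f j ws + r ws) + γ / 2 * ‖ws - w₀‖ ^ 2 ≤
      ((1 / (n : ℝ)) * ∑ j, f j w + r w) + γ / 2 * ‖w - w₀‖ ^ 2)
    (hmin' : ∀ w ∈ W,
      ((1 / (n : ℝ)) * ∑ j, f' j ws' + r ws') + γ / 2 * ‖ws' - w₀'‖ ^ 2 ≤
      ((1 / (n : ℝ)) * ∑ j, f' j w + r w) + γ / 2 * ‖w - w₀'‖ ^ 2) :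
    ‖ws - ws'‖ ≤ ‖w₀ - w₀'‖ + 4 * Real.sqrt (2 * L * M) / (n * γ) := by
  have hconv'' : ∀ j, ConvexOn ℝ W (f' j) := fun j ↦ by
    rcases eq_or_ne j i with rfl | hj
    exacts [hconv', hdiff j hj ▸ hconv j]
  have hgrowth := ((convexOn_regularizedRisk hconv hr).strongConvexOn_add_sq_norm_sub γ w₀
    ).add_sq_le_of_isMinOn (isMinOn_iff.2 hmin) hws hws'
  have hgrowth' := ((convexOn_regularizedRisk hconv'' hr).strongConvexOn_add_sq_norm_sub γ w₀'
    ).add_sq_le_of_isMinOn (isMinOn_iff.2 hmin') hws' hws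
  have hlip := (hsm i).abs_sub_le hL (fun w ↦ (hbd i w).1) (fun w ↦ (hbd i w).2) ws' ws
  have hlip' := hsm'.abs_sub_le hL (fun w ↦ (hbd' w).1) (fun w ↦ (hbd' w).2) ws ws'
  have hperturb : regularizedRisk f r ws' - regularizedRisk f' r ws' -
      (regularizedRisk f r ws - regularizedRisk f' r ws) ≤
        2 * √(2 * L * M) / n * ‖ws - ws'‖ := by
    rw [regularizedRisk_sub_regularizedRisk hdiff, regularizedRisk_sub_regularizedRisk hdiff,
      ← sub_div, div_mul_eq_mul_div]
    rw [norm_sub_rev ws'] at hlip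
    gcongr
    linarith [le_abs_self (f i ws' - f i ws), le_abs_self (f' i ws - f' i ws')]
  calc ‖ws - ws'‖ ≤ ‖w₀ - w₀'‖ + 2 * √(2 * L * M) / n / γ :=
        norm_sub_le_of_quadratic_growth hγ (by positivity) hgrowth hgrowth' hperturb
    _ ≤ ‖w₀ - w₀'‖ + 4 * √(2 * L * M) / (n * γ) := by
        rw [div_div]; gcongr; norm_num

theorem minibatch_prox_stability_expansion {p n : ℕ} (hn : 0 < n)
    (W : Set (EuclideanSpace ℝ (Fin p))) (hW : Convex ℝ W)
    (L M γ : ℝ) (hL : 0 < L) (hM : 0 < M) (hγ : 0 < γ)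
    (f f' : Fin n → EuclideanSpace ℝ (Fin p) → ℝ) (i : Fin n)
    (hdiff : ∀ j, j ≠ i → f' j = f j)
    (hconv : ∀ j, ConvexOn ℝ W (f j)) (hconv' : ConvexOn ℝ W (f' i))
    (hsm : ∀ j, LSmooth L (f j)) (hsm' : LSmooth L (f' i))
    (hbd : ∀ j w, 0 ≤ f j w ∧ f j w ≤ M) (hbd' : ∀ w, 0 ≤ f' i w ∧ f' i w ≤ M)
    (r : EuclideanSpace ℝ (Fin p) → ℝ) (hr : ConvexOn ℝ W r)
    (w₀ w₀' ws ws' : EuclideanSpace ℝ (Fin p))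
    (hw₀ : w₀ ∈ W) (hw₀' : w₀' ∈ W) (hws : ws ∈ W) (hws' : ws' ∈ W)
    (hmin : ∀ w ∈ W,
      ((1 / (n : ℝ)) * ∑ j, f j ws + r ws) + γ / 2 * ‖ws - w₀‖ ^ 2 ≤
      ((1 / (n : ℝ)) * ∑ j, f j w + r w) + γ / 2 * ‖w - w₀‖ ^ 2)
    (hmin' : ∀ w ∈ W,
      ((1 / (n : ℝ)) * ∑ j, f' j ws' + r ws') + γ / 2 * ‖ws' - w₀'‖ ^ 2 ≤
      ((1 / (n : ℝ)) * ∑ j, f' j w + r w) + γ / 2 * ‖w - w₀'‖ ^ 2) :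
    ‖ws - ws'‖ ≤ ‖w₀ - w₀'‖ + 4 * Real.sqrt (2 * L * M) / (n * γ) :=
  minibatch_prox_stability_expansion_general W L M γ hL hγ f f' i hdiff hconv hconv' hsm hsm' hbd
    hbd' r hr w₀ w₀' ws ws' hws hws' hmin hmin'
end

section
/- Let (uₜ)_{t≥0} be a nonnegative real sequence, (Sₜ)_{t≥0} a nondecreasing nonnegative sequence with S₀ ≥ u₀², and (αₜ)_{t≥1} nonnegative reals. If for every t ≥ 1 it holds that uₜ² ≤ Sₜ + Σ_{τ=1}^{t} α_τ u_τ, then for every t ≥ 1, uₜ ≤ √(Sₜ) + Σ_{τ=1}^{t} α_τ. -/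
theorem quadratic_recursion_bound (u S : ℕ → ℝ) (α : ℕ → ℝ)
    (hu : ∀ t, 0 ≤ u t) (hS : ∀ t, 0 ≤ S t) (hSmono : Monotone S)
    (hS0 : u 0 ^ 2 ≤ S 0) (hα : ∀ t, 0 ≤ α t)
    (hrec : ∀ t, 1 ≤ t → u t ^ 2 ≤ S t + ∑ τ ∈ Finset.Icc 1 t, α τ * u τ) :
    ∀ t, 1 ≤ t → u t ≤ Real.sqrt (S t) + ∑ τ ∈ Finset.Icc 1 t, α τ := by
  intro t ht
  set A := ∑ τ ∈ Finset.Icc 1 t, α τ with hA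
  have hAnn : 0 ≤ A := Finset.sum_nonneg fun i _ => hα i
  have hsq : Real.sqrt (S t) ^ 2 = S t := Real.sq_sqrt (hS t)
  have hsqnn : 0 ≤ Real.sqrt (S t) := Real.sqrt_nonneg _
  -- maximum of u over 0..t
  obtain ⟨τ0, hτ0mem, hτ0max⟩ := (Finset.Icc 0 t).exists_max_image u ⟨0, by simp⟩
  have hτ0le : τ0 ≤ t := (Finset.mem_Icc.mp hτ0mem).2
  set M := u τ0 with hM
  have hMnn : 0 ≤ M := hu τ0
  have hut : u t ≤ M := hτ0max t (Finset.mem_Icc.mpr ⟨Nat.zero_le _, le_refl _⟩)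
  have hkey : M ^ 2 ≤ S t + A * M := by
    rcases Nat.eq_zero_or_pos τ0 with h0 | hpos
    · have : M ^ 2 ≤ S 0 := by rw [hM, h0]; exact hS0
      have := this.trans (hSmono (Nat.zero_le t))
      nlinarith [mul_nonneg hAnn hMnn]
    · have h1 : M ^ 2 ≤ S τ0 + ∑ τ ∈ Finset.Icc 1 τ0, α τ * u τ := hrec τ0 hpos
      have h2 : ∑ τ ∈ Finset.Icc 1 τ0, α τ * u τ ≤ ∑ τ ∈ Finset.Icc 1 t, α τ * u τ := by
        apply Finset.sum_le_sum_of_subset_of_nonneg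
        · exact Finset.Icc_subset_Icc_right hτ0le
        · intro i _ _; exact mul_nonneg (hα i) (hu i)
      have h3 : ∑ τ ∈ Finset.Icc 1 t, α τ * u τ ≤ A * M := by
        rw [hA, Finset.sum_mul]
        apply Finset.sum_le_sum
        intro i hi
        have : u i ≤ M := hτ0max i (Finset.mem_Icc.mpr ⟨Nat.zero_le _, (Finset.mem_Icc.mp hi).2⟩)
        exact mul_le_mul_of_nonneg_left this (hα i)
      have := hSmono hτ0le
      linarith
  have hMle : M ≤ Real.sqrt (S t) + A := by
    by_contra h
    push_neg at h
    have hMgt : Real.sqrt (S t) ≤ M := le_of_lt (lt_of_le_of_lt (le_add_of_nonneg_right hAnn) h)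
    nlinarith
  linarith
end

section
/- Let g : ℝ^p → ℝ be non-negative, differentiable and L-smooth with L > 0, and bounded above by M. Then g is √(2LM)-Lipschitz: for all w, w', |g(w) - g(w')| ≤ √(2LM)·‖w - w'‖. -/
open RealInnerProductSpace

theorem smooth_bounded_lipschitz {p : ℕ} (L M : ℝ) (hL : 0 < L)
    (g : EuclideanSpace ℝ (Fin p) → ℝ)
    (hg : ∀ w, 0 ≤ g w ∧ g w ≤ M) (hdiff : Differentiable ℝ g)
    (hsmooth : ∀ w w', |g w - g w' - ⟪gradient g w, w - w'⟫| ≤ L / 2 * ‖w - w'‖ ^ 2) :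
    ∀ w w', |g w - g w'| ≤ Real.sqrt (2 * L * M) * ‖w - w'‖ := by
  have hgrad : ∀ w, ‖gradient g w‖ ^ 2 ≤ 2 * L * M := by
    intro w
    set v := gradient g w with hv
    have key := hsmooth w (w - (1 / L) • v)
    have hsub : w - (w - (1 / L) • v) = (1 / L) • v := by abel
    rw [hsub] at key
    have hinner : ⟪v, (1 / L) • v⟫ = (1 / L) * ‖v‖ ^ 2 := by
      rw [real_inner_smul_right, real_inner_self_eq_norm_sq]
    have hnorm : ‖(1 / L) • v‖ ^ 2 = (1 / L) ^ 2 * ‖v‖ ^ 2 := by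
      rw [norm_smul, Real.norm_eq_abs, abs_of_pos (by positivity : (0:ℝ) < 1 / L), mul_pow]
    rw [hinner, hnorm] at key
    have h1 := abs_le.mp key
    have e1 : L / 2 * ((1 / L) ^ 2 * ‖v‖ ^ 2) = ‖v‖ ^ 2 / (2 * L) := by
      field_simp
    have h2 : g (w - (1 / L) • v) ≤ g w - ‖v‖ ^ 2 / (2 * L) := by
      have e2 : 1 / L * ‖v‖ ^ 2 = 2 * (‖v‖ ^ 2 / (2 * L)) := by field_simp
      have := h1.1; rw [e1] at this; linarith
    have h3 := (hg (w - (1 / L) • v)).1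
    have h4 := (hg w).2
    have h5 : ‖v‖ ^ 2 / (2 * L) ≤ M := by linarith
    rw [div_le_iff₀ (by positivity)] at h5
    linarith
  have hC : ∀ x, ‖fderiv ℝ g x‖ ≤ Real.sqrt (2 * L * M) := by
    intro x
    have heq : fderiv ℝ g x = (InnerProductSpace.toDual ℝ _) (gradient g x) := by
      rw [gradient]; simp
    rw [heq, LinearIsometryEquiv.norm_map]
    have := hgrad x
    nlinarith [Real.sq_sqrt (by nlinarith [(hg x).1, (hg x).2, hL.le] : (0:ℝ) ≤ 2 * L * M),
      Real.sqrt_nonneg (2 * L * M), norm_nonneg (gradient g x)]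
  intro w w'
  have := Convex.norm_image_sub_le_of_norm_fderiv_le
    (fun x _ => hdiff x)
    (fun x _ => hC x) convex_univ (Set.mem_univ w') (Set.mem_univ w)
  simpa [Real.norm_eq_abs] using this
end

section
/- Let g : ℝ^p → ℝ be convex, non-negative, differentiable and L-smooth. Then for all w, w' ∈ ℝ^p, |g(w) - g(w')| ≤ (√(2Lg(w)) + √(2Lg(w')))·‖w - w'‖. -/
/-!
Convexity gives `g w - g w' ≤ ⟪∇g w, w - w'⟫ ≤ ‖∇g w‖ ‖w - w'‖`, and symmetrically. A gradient
step `w - L⁻¹ ∇g w` lowers a non-negative `L`-smooth `g` by at least `‖∇g w‖² / (2L)`, which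
cannot exceed `g w`; hence `‖∇g w‖ ≤ √(2 L g w)`.
-/

open RealInnerProductSpace Set

variable {E : Type*} [NormedAddCommGroup E] [InnerProductSpace ℝ E] [CompleteSpace E]
  {f : E → ℝ}

theorem ConvexOn.inner_gradient_le_sub (hf : ConvexOn ℝ univ f) {x : E}
    (hd : DifferentiableAt ℝ f x) (y : E) : ⟪gradient f x, y - x⟫ ≤ f y - f x := by
  have hline : ConvexOn ℝ univ (f ∘ AffineMap.lineMap (k := ℝ) x y) := by
    simpa using hf.comp_affineMap (AffineMap.lineMap (k := ℝ) x y)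
  have hderiv : HasDerivAt (f ∘ AffineMap.lineMap (k := ℝ) x y) ⟪gradient f x, y - x⟫ 0 := by
    simpa using hd.hasGradientAt.hasFDerivAt.comp_hasDerivAt_of_eq (0 : ℝ)
      AffineMap.hasDerivAt_lineMap (AffineMap.lineMap_apply_zero x y).symm
  simpa [slope_def_field] using
    hline.le_slope_of_hasDerivAt (mem_univ 0) (mem_univ 1) one_pos hderiv

theorem ConvexOn.sub_le_norm_gradient_mul (hf : ConvexOn ℝ univ f) {x : E}
    (hd : DifferentiableAt ℝ f x) (y : E) : f x - f y ≤ ‖gradient f x‖ * ‖x - y‖ := by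
  have h := hf.inner_gradient_le_sub hd y
  have hcs := real_inner_le_norm (gradient f x) (x - y)
  rw [← neg_sub x y, inner_neg_right] at h
  linarith

theorem norm_gradient_sq_le_of_nonneg {L : ℝ} (hL : 0 < L) (hf0 : ∀ y, 0 ≤ f y) {x : E}
    (hdescent : ∀ y, f y ≤ f x + ⟪gradient f x, y - x⟫ + L / 2 * ‖y - x‖ ^ 2) :
    ‖gradient f x‖ ^ 2 ≤ 2 * L * f x := by
  set v := gradient f x
  have hstep := (hf0 _).trans (hdescent (x - L⁻¹ • v))
  rw [sub_sub_cancel_left, inner_neg_right, real_inner_smul_right, real_inner_self_eq_norm_sq,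
    norm_neg, norm_smul, Real.norm_of_nonneg (inv_nonneg.2 hL.le)] at hstep
  field_simp at hstep
  linarith

theorem convex_smooth_value_diff_bound {p : ℕ} (L : ℝ) (hL : 0 < L)
    (g : EuclideanSpace ℝ (Fin p) → ℝ)
    (hconv : ConvexOn ℝ Set.univ g) (hg0 : ∀ w, 0 ≤ g w) (hdiff : Differentiable ℝ g)
    (hsmooth : ∀ w w', |g w - g w' - ⟪gradient g w, w - w'⟫| ≤ L / 2 * ‖w - w'‖ ^ 2) :
    ∀ w w', |g w - g w'| ≤
      (Real.sqrt (2 * L * g w) + Real.sqrt (2 * L * g w')) * ‖w - w'‖ := by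
  have hgrad (w) : ‖gradient g w‖ ≤ √(2 * L * g w) := by
    refine Real.le_sqrt_of_sq_le (norm_gradient_sq_le_of_nonneg hL hg0 fun w' => ?_)
    have := (abs_le.1 (hsmooth w w')).1
    rw [← neg_sub w w', inner_neg_right, norm_neg]
    linarith
  have hone_sided (w w') : g w - g w' ≤ √(2 * L * g w) * ‖w - w'‖ :=
    (hconv.sub_le_norm_gradient_mul (hdiff w) w').trans
      (mul_le_mul_of_nonneg_right (hgrad w) (norm_nonneg _))
  intro w w'
  have h₁ := hone_sided w w'
  have h₂ := hone_sided w' w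
  rw [norm_sub_rev] at h₂
  rw [abs_sub_le_iff, add_mul]
  have hn := norm_nonneg (w - w')
  constructor
  · linarith [mul_nonneg (Real.sqrt_nonneg (2 * L * g w')) hn]
  · linarith [mul_nonneg (Real.sqrt_nonneg (2 * L * g w)) hn]
end

section
/- Let λ, ρ, T > 0 with ρ ∈ (0, 1/2], and suppose nonnegative reals (dₜ)_{t=0}^{T} and (eₜ)_{t=1}^{T} satisfy eₜ ≥ 0 and, for all t ∈ [T], (1-ρ)eₜ ≤ (λρt/4)d_{t-1} - (λρ(t+2)/4)dₜ + C/(t+1) for a constant C ≥ 0. Then (2/(T(T+1)))·Σ_{t=1}^{T} t·eₜ ≤ (2λρ/(T(T+1)))·d₀ + 4C/((T+1)). -/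
theorem weighted_telescoping_bound (T : ℕ) (hT : 1 ≤ T)
    (lam ρ C : ℝ) (hlam : 0 < lam) (hρ0 : 0 < ρ) (hρ : ρ ≤ 1 / 2) (hC : 0 ≤ C)
    (d e : ℕ → ℝ) (hd : ∀ t, 0 ≤ d t) (he : ∀ t, 0 ≤ e t)
    (hrec : ∀ t ∈ Finset.Icc 1 T,
      (1 - ρ) * e t ≤ lam * ρ * t / 4 * d (t - 1) - lam * ρ * (t + 2) / 4 * d t
        + C / (t + 1)) :
    2 / ((T : ℝ) * (T + 1)) * ∑ t ∈ Finset.Icc 1 T, (t : ℝ) * e t ≤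
      2 * lam * ρ / ((T : ℝ) * (T + 1)) * d 0 + 4 * C / (T + 1) := by
  set f : ℕ → ℝ := fun t => lam * ρ * ((t : ℝ) + 1) * ((t : ℝ) + 2) / 4 * d t with hf
  have hT0 : (0:ℝ) < T := by exact_mod_cast hT
  have key : ∀ i ∈ Finset.range T,
      ((1 + i : ℕ) : ℝ) * e (1 + i) ≤ 2 * (f i - f (i + 1)) + 2 * C := by
    intro i hi
    rw [Finset.mem_range] at hi
    have hmem : (i + 1) ∈ Finset.Icc 1 T := by simp; omega
    have h := hrec (i + 1) hmem
    simp only [Nat.add_sub_cancel] at h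
    push_cast at h
    have hpos : (0:ℝ) ≤ (i : ℝ) + 2 := by positivity
    have h2 := mul_le_mul_of_nonneg_left h hpos
    have hdivC : ((i:ℝ) + 2) * (C / ((i:ℝ) + 1 + 1)) = C := by
      rw [show (i:ℝ) + 1 + 1 = (i:ℝ) + 2 by ring]
      field_simp
    have h3 : ((i:ℝ) + 2) * ((1 - ρ) * e (i + 1)) ≤ f i - f (i + 1) + C := by
      calc ((i:ℝ) + 2) * ((1 - ρ) * e (i + 1)) ≤
          ((i:ℝ) + 2) * (lam * ρ * ((i:ℝ) + 1) / 4 * d i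
            - lam * ρ * ((i:ℝ) + 1 + 2) / 4 * d (i + 1) + C / ((i:ℝ) + 1 + 1)) := h2
        _ = f i - f (i + 1) + C := by
            rw [mul_add, hdivC, hf]; push_cast; ring
    have he1 := he (i + 1)
    have hrho : (0:ℝ) ≤ 1 - 2 * ρ := by linarith
    have hextra : 0 ≤ e (i + 1) * (1 - 2 * ρ) * ((i:ℝ) + 2) :=
      mul_nonneg (mul_nonneg he1 hrho) hpos
    have : ((1 + i : ℕ) : ℝ) = (i : ℝ) + 1 := by push_cast; ring
    have he' : e (1 + i) = e (i + 1) := by rw [Nat.add_comm]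
    rw [this, he']
    nlinarith [h3, he1, hextra]
  have hsum : ∑ t ∈ Finset.Icc 1 T, (t : ℝ) * e t ≤ 2 * (f 0 - f T) + 2 * T * C := by
    rw [← Finset.Ico_add_one_right_eq_Icc, Finset.sum_Ico_eq_sum_range]
    calc ∑ i ∈ Finset.range T, ((1 + i : ℕ) : ℝ) * e (1 + i)
        ≤ ∑ i ∈ Finset.range T, (2 * (f i - f (i + 1)) + 2 * C) :=
          Finset.sum_le_sum key
      _ = 2 * (f 0 - f T) + 2 * T * C := by
          rw [Finset.sum_add_distrib, ← Finset.mul_sum, Finset.sum_range_sub' f]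
          simp [mul_comm]; ring
  have hfT : 0 ≤ f T := by
    have := hd T
    have : (0:ℝ) ≤ lam * ρ * ((T:ℝ) + 1) * ((T:ℝ) + 2) / 4 * d T := by positivity
    simpa [hf] using this
  have hS : ∑ t ∈ Finset.Icc 1 T, (t : ℝ) * e t ≤ 2 * f 0 + 2 * T * C := by
    linarith
  have hcoef : (0:ℝ) ≤ 2 / ((T : ℝ) * (T + 1)) := by positivity
  calc 2 / ((T : ℝ) * (T + 1)) * ∑ t ∈ Finset.Icc 1 T, (t : ℝ) * e t
      ≤ 2 / ((T : ℝ) * (T + 1)) * (2 * f 0 + 2 * T * C) :=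
        mul_le_mul_of_nonneg_left hS hcoef
    _ = 2 * lam * ρ / ((T : ℝ) * (T + 1)) * d 0 + 4 * C / (T + 1) := by
        simp only [hf]
        push_cast
        field_simp
        ring
end
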